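/- arXiv:2004.08380 — 3 statements merged into one kernel-verified Lean document; each statement's English description precedes it below -/
import Mathlib

section
/- If P : 𝒲 → 𝒱 is a Grothendieck fibration and 𝒜 is any category, then the post-composition functor P^𝒜 : 𝒲^𝒜 → 𝒱^𝒜 between functor categories is again a Grothendieck fibration, with cartesian liftings computed pointwise. -/
/-!
The lift of `j : X ⟶ Y ⋙ P` is built object by object from cartesian lifts of the components
`j.app a`. For `f : a ⟶ b`, the morphism `jb a ≫ Y.map f` lies over `X.map f` followed by
`j.app b`, so the universal property of the lift at `b` factors it uniquely through `jb b`;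
this factorization is the lifted functor on `f`. Functoriality, naturality of the induced
factorizations and their uniqueness all follow from the fact that a morphism into a cartesian
lift is determined by its composite with the lift and its image under `P`.
-/

open CategoryTheory

/-- `P` is a (Grothendieck) fibration: every `j : X → P(𝕐)` has a cartesian
lifting `𝕛 : 𝕏 → 𝕐` with `P 𝕛 = j`. -/
def IsFibrationP {W : Type*} {V : Type*} [Category W] [Category V] (P : W ⥤ V) : Prop :=
  ∀ (Y : W) (X : V) (j : X ⟶ P.obj Y),
    ∃ (Xb : W) (jb : Xb ⟶ Y) (h : P.obj Xb = X),
      P.map jb = eqToHom h ≫ j ∧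
      ∀ (Wb : W) (k : Wb ⟶ Y) (hh : P.obj Wb ⟶ X),
        P.map k = hh ≫ j →
          ∃! hb : Wb ⟶ Xb, hb ≫ jb = k ∧ P.map hb ≫ eqToHom h = hh

section CartesianLift

variable {W V : Type*} [Category W] [Category V]

def IsCartesianLift (P : W ⥤ V) {Y : W} {X : V} (j : X ⟶ P.obj Y) {Xb : W} (jb : Xb ⟶ Y)
    (h : P.obj Xb = X) : Prop :=
  P.map jb = eqToHom h ≫ j ∧
    ∀ (Wb : W) (k : Wb ⟶ Y) (hh : P.obj Wb ⟶ X),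
      P.map k = hh ≫ j → ∃! hb : Wb ⟶ Xb, hb ≫ jb = k ∧ P.map hb ≫ eqToHom h = hh

namespace IsCartesianLift

variable {P : W ⥤ V} {Y : W} {X : V} {j : X ⟶ P.obj Y} {Xb : W} {jb : Xb ⟶ Y}
  {h : P.obj Xb = X} (hc : IsCartesianLift P j jb h)
include hc

noncomputable def lift {Wb : W} (k : Wb ⟶ Y) (hh : P.obj Wb ⟶ X) (hk : P.map k = hh ≫ j) :
    Wb ⟶ Xb :=
  (hc.2 Wb k hh hk).exists.choose

@[simp]
theorem lift_comp {Wb : W} (k : Wb ⟶ Y) (hh : P.obj Wb ⟶ X) (hk : P.map k = hh ≫ j) :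
    hc.lift k hh hk ≫ jb = k :=
  (hc.2 Wb k hh hk).exists.choose_spec.1

@[simp]
theorem lift_comp_assoc {Wb : W} (k : Wb ⟶ Y) (hh : P.obj Wb ⟶ X) (hk : P.map k = hh ≫ j)
    {Z : W} (g : Y ⟶ Z) : hc.lift k hh hk ≫ jb ≫ g = k ≫ g := by
  rw [← Category.assoc, hc.lift_comp]

@[simp]
theorem map_lift_comp_eqToHom {Wb : W} (k : Wb ⟶ Y) (hh : P.obj Wb ⟶ X)
    (hk : P.map k = hh ≫ j) : P.map (hc.lift k hh hk) ≫ eqToHom h = hh :=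
  (hc.2 Wb k hh hk).exists.choose_spec.2

@[simp]
theorem map_lift_comp_eqToHom_assoc {Wb : W} (k : Wb ⟶ Y) (hh : P.obj Wb ⟶ X)
    (hk : P.map k = hh ≫ j) {Z : V} (g : X ⟶ Z) :
    P.map (hc.lift k hh hk) ≫ eqToHom h ≫ g = hh ≫ g := by
  rw [← Category.assoc, hc.map_lift_comp_eqToHom]

theorem eq_lift {Wb : W} {k : Wb ⟶ Y} {hh : P.obj Wb ⟶ X} (hk : P.map k = hh ≫ j)
    {g : Wb ⟶ Xb} (hjb : g ≫ jb = k) (hP : P.map g ≫ eqToHom h = hh) : g = hc.lift k hh hk :=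
  (hc.2 Wb k hh hk).unique ⟨hjb, hP⟩ (hc.2 Wb k hh hk).exists.choose_spec

theorem hom_ext {Wb : W} {g g' : Wb ⟶ Xb} (hjb : g ≫ jb = g' ≫ jb)
    (hP : P.map g ≫ eqToHom h = P.map g' ≫ eqToHom h) : g = g' := by
  have hk : P.map (g ≫ jb) = (P.map g ≫ eqToHom h) ≫ j := by
    rw [P.map_comp, hc.1, Category.assoc]
  rw [hc.eq_lift hk rfl rfl, hc.eq_lift hk hjb.symm hP.symm]

end IsCartesianLift

end CartesianLift

section Pointwise

variable {W V A : Type*} [Category W] [Category V] [Category A] {P : W ⥤ V}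
  {Y : A ⥤ W} {X : A ⥤ V} {j : X ⟶ Y ⋙ P} {Xb : A → W} {jb : ∀ a, Xb a ⟶ Y.obj a}
  {h : ∀ a, P.obj (Xb a) = X.obj a} (hc : ∀ a, IsCartesianLift P (j.app a) (jb a) (h a))
include hc

namespace IsCartesianLift

theorem map_comp_map_eq_eqToHom_comp (a : A) {b : A} (f : a ⟶ b) :
    P.map (jb a ≫ Y.map f) = (eqToHom (h a) ≫ X.map f) ≫ j.app b := by
  rw [P.map_comp, (hc a).1, Category.assoc, Category.assoc]
  exact congrArg _ (j.naturality f).symm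

noncomputable def pointwiseFunctor : A ⥤ W where
  obj := Xb
  map {a b} f := (hc b).lift _ _ (map_comp_map_eq_eqToHom_comp hc a f)
  map_id a := (hc a).hom_ext (by simp) (by simp)
  map_comp {a b c} f g := by
    refine (hc c).hom_ext ?_ ?_
    · simp only [Category.assoc, lift_comp, lift_comp_assoc, Functor.map_comp]
    · simp only [Functor.map_comp, Category.assoc, map_lift_comp_eqToHom,
        map_lift_comp_eqToHom_assoc]

noncomputable def pointwiseNatTrans : pointwiseFunctor hc ⟶ Y where
  app := jb
  naturality a b f := (hc b).lift_comp _ _ (map_comp_map_eq_eqToHom_comp hc a f)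

theorem pointwiseFunctor_comp : pointwiseFunctor hc ⋙ P = X :=
  CategoryTheory.Functor.ext h fun a b f => by
    have hf := (hc b).map_lift_comp_eqToHom _ _ (map_comp_map_eq_eqToHom_comp hc a f)
    exact ((comp_eqToHom_iff _ _ _).1 hf).trans (Category.assoc _ _ _)

theorem isCartesianLift_pointwiseNatTrans :
    IsCartesianLift ((Functor.whiskeringRight A W V).obj P) j (pointwiseNatTrans hc)
      (pointwiseFunctor_comp hc) := by
  have eqToHom_app' (a : A) : (eqToHom (pointwiseFunctor_comp hc)).app a = eqToHom (h a) :=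
    eqToHom_app _ a
  refine ⟨?_, fun G k hh hk => ?_⟩
  · ext a
    rw [NatTrans.comp_app, eqToHom_app']
    exact (hc a).1
  have hk' (a : A) : P.map (k.app a) = hh.app a ≫ j.app a :=
    NatTrans.congr_app hk a
  refine ⟨{ app a := (hc a).lift _ _ (hk' a), naturality a b f := ?_ }, ⟨?_, ?_⟩, ?_⟩
  · refine (hc b).hom_ext ?_ ?_
    · simp [pointwiseFunctor]
    · simpa [pointwiseFunctor] using hh.naturality f
  · ext a
    exact (hc a).lift_comp _ _ (hk' a)
  · ext a
    rw [NatTrans.comp_app, eqToHom_app']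
    exact (hc a).map_lift_comp_eqToHom _ _ (hk' a)
  · rintro t ⟨htk, hth⟩
    ext a
    refine (hc a).eq_lift (hk' a) (NatTrans.congr_app htk a) ?_
    have hth' := NatTrans.congr_app hth a
    rwa [NatTrans.comp_app, eqToHom_app'] at hth'

end IsCartesianLift

end Pointwise

/-- If `P : 𝒲 → 𝒱` is a Grothendieck fibration and `𝒜` is any
category, then post-composition `P^𝒜 : 𝒲^𝒜 → 𝒱^𝒜` is again a Grothendieck
fibration. -/
theorem stmt9 {W V A : Type*} [Category W] [Category V] [Category A]
    (P : W ⥤ V) (hP : IsFibrationP P) :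
    IsFibrationP ((Functor.whiskeringRight A W V).obj P) := by
  intro Y X j
  choose Xb jb h hc using fun a => hP (Y.obj a) (X.obj a) (j.app a)
  exact ⟨_, _, _, IsCartesianLift.isCartesianLift_pointwiseNatTrans hc⟩
end

section
/- In any nominal monoidal theory, the equations of Figures 'permutation actions' and 'δ' entail that for every term t : A → B and every finite permutation π, π·t = π_A⁻¹ ; t ; π_B, where π_A = ⨄_{a∈A} δ_{a,π(a)}. -/
open MulAction

/-- Names -/
abbrev Name := ℕ

/-- The group of finite (finitely supported) permutations of names. -/
def FinPerm : Subgroup (Equiv.Perm Name) where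
  carrier := {π | {a | π a ≠ a}.Finite}
  one_mem' := by simp
  mul_mem' := by
    intro π σ hπ hσ
    apply (hπ.union hσ).subset
    intro a ha
    by_contra h
    simp only [Set.mem_union, Set.mem_setOf_eq, not_or, not_not] at h
    exact ha (by simp [Equiv.Perm.mul_apply, h.1, h.2])
  inv_mem' := by
    intro π hπ
    apply (hπ.image π).subset
    intro a ha
    exact ⟨π⁻¹ a, by simpa using (Ne.symm ha), by simp⟩

noncomputable instance : SMul FinPerm Name := ⟨fun π a => π.1 a⟩

noncomputable instance : MulAction FinPerm Name where
  one_smul a := rfl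
  mul_smul π σ a := rfl

/-- A nominal set: an action of the finite permutations in which every element
has a finite support. -/
class NominalSet (α : Type*) extends MulAction FinPerm α where
  finSupp : ∀ x : α, ∃ S : Finset Name, Supports FinPerm (↑S : Set Name) x

/-- The least support of an element (intersection of all supporting sets). -/
def supp {α : Type*} [MulAction FinPerm α] (x : α) : Set Name :=
  ⋂₀ {S : Set Name | Supports FinPerm S x}

open Pointwise

/-- A signature of generators for a nominal monoidal theory. -/
structure NSig where
  gen : Type
  ar : gen → ℕ
  car : gen → ℕ

/-- Terms of a nominal monoidal theory: generators `[a⟩γ⟨b]`, identities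
`id_a`, renamings `δ_{ab}`, the empty term `id_∅`, tensor, sequential
composition, and the permutation action. -/
inductive NTrm (S : NSig) : Type
  | gen : S.gen → List Name → List Name → NTrm S
  | idt : Name → NTrm S
  | delta : Name → Name → NTrm S
  | unit : NTrm S
  | tens : NTrm S → NTrm S → NTrm S
  | seq : NTrm S → NTrm S → NTrm S
  | pact : FinPerm → NTrm S → NTrm S

namespace NTrm

variable {S : NSig}

noncomputable def dom : NTrm S → Finset Name
  | .gen _ a _ => a.toFinset
  | .idt a => {a}
  | .delta a _ => {a}
  | .unit => ∅
  | .tens s t => s.dom ∪ t.dom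
  | .seq s _ => s.dom
  | .pact π t => π • t.dom

noncomputable def cod : NTrm S → Finset Name
  | .gen _ _ b => b.toFinset
  | .idt a => {a}
  | .delta _ b => {b}
  | .unit => ∅
  | .tens s t => s.cod ∪ t.cod
  | .seq _ t => t.cod
  | .pact π t => π • t.cod

/-- Well-formedness of a term. -/
def WF : NTrm S → Prop
  | .gen γ a b => a.Nodup ∧ b.Nodup ∧ a.length = S.ar γ ∧ b.length = S.car γ
  | .idt _ => True
  | .delta _ _ => True
  | .unit => True
  | .tens s t => s.WF ∧ t.WF ∧ Disjoint s.dom t.dom ∧ Disjoint s.cod t.cod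
  | .seq s t => s.WF ∧ t.WF ∧ s.cod = t.dom
  | .pact _ t => t.WF

end NTrm

/-- The identity term on a finite set of names. -/
noncomputable def idOf {S : NSig} (A : Finset Name) : NTrm S :=
  (A.toList.map NTrm.idt).foldr NTrm.tens NTrm.unit

/-- The disjoint union of renamings `⨄ δ_{aᵢbᵢ}` given by a list of pairs. -/
def renOf {S : NSig} (l : List (Name × Name)) : NTrm S :=
  (l.map fun p => NTrm.delta p.1 p.2).foldr NTrm.tens NTrm.unit

/-- The renaming term `π_A = ⨄_{a∈A} δ_{a,π(a)} : A → π[A]`. -/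
noncomputable def permTermOf {S : NSig} (π : FinPerm) (A : Finset Name) : NTrm S :=
  renOf (A.toList.map fun a => (a, π • a))

/-- The renaming term `π_A⁻¹ = ⨄_{a∈A} δ_{π(a),a} : π[A] → A`. -/
noncomputable def permTermInv {S : NSig} (π : FinPerm) (A : Finset Name) : NTrm S :=
  renOf (A.toList.map fun a => (π • a, a))

/-- Equality of terms of a nominal monoidal theory: the congruence generated by
the extra equations `E` together with the NMT base equations (category laws,
commutative-monoid laws for `⊎`, interchange, the permutation-action equations
and the `δ`-equations, including NMT-left and NMT-right). -/
inductive NEq (S : NSig) (E : NTrm S → NTrm S → Prop) : NTrm S → NTrm S → Prop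
  | base {s t} : E s t → NEq S E s t
  | refl (t) : NEq S E t t
  | symm {s t} : NEq S E s t → NEq S E t s
  | trans {s t u} : NEq S E s t → NEq S E t u → NEq S E s u
  | congr_tens {s s' t t'} : NEq S E s s' → NEq S E t t' →
      NEq S E (.tens s t) (.tens s' t')
  | congr_seq {s s' t t'} : NEq S E s s' → NEq S E t t' →
      NEq S E (.seq s t) (.seq s' t')
  | congr_pact (π) {s t} : NEq S E s t → NEq S E (.pact π s) (.pact π t)
  -- category laws
  | seq_id_left (t : NTrm S) : NEq S E (.seq (idOf t.dom) t) t
  | seq_id_right (t : NTrm S) : NEq S E (.seq t (idOf t.cod)) t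
  | seq_assoc (s t u) : NEq S E (.seq (.seq s t) u) (.seq s (.seq t u))
  -- commutative monoid laws for the tensor, with unit `id_∅`
  | tens_comm (s t) : NEq S E (.tens s t) (.tens t s)
  | tens_assoc (s t u) : NEq S E (.tens (.tens s t) u) (.tens s (.tens t u))
  | tens_unit_left (t) : NEq S E (.tens .unit t) t
  | tens_unit_right (t) : NEq S E (.tens t .unit) t
  -- interchange (NMT-ch)
  | interchange (s t u v) :
      NEq S E (.seq (.tens s u) (.tens t v)) (.tens (.seq s t) (.seq u v))
  -- permutation-action equations
  | pact_idt (π a) : NEq S E (.pact π (.idt a)) (.idt (π • a))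
  | pact_delta (π a b) : NEq S E (.pact π (.delta a b)) (.delta (π • a) (π • b))
  | pact_gen (π γ a b) :
      NEq S E (.pact π (.gen γ a b)) (.gen γ (a.map (π • ·)) (b.map (π • ·)))
  | pact_unit (π) : NEq S E (.pact π .unit) .unit
  | pact_tens (π s t) : NEq S E (.pact π (.tens s t)) (.tens (.pact π s) (.pact π t))
  | pact_seq (π s t) : NEq S E (.pact π (.seq s t)) (.seq (.pact π s) (.pact π t))
  | pact_one (t) : NEq S E (.pact 1 t) t
  | pact_mul (π σ t) : NEq S E (.pact (π * σ) t) (.pact π (.pact σ t))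
  -- δ-equations
  | delta_id (a) : NEq S E (.delta a a) (.idt a)
  | delta_comp (a b c) : NEq S E (.seq (.delta a b) (.delta b c)) (.delta a c)
  -- NMT-left
  | nmt_left (γ : S.gen) (a b : List Name) (i : ℕ) (hi : i < a.length) (x : Name)
      (hx : x ∉ a) :
      NEq S E
        (.seq (.tens (.delta x (a.getD i 0)) (idOf (a.toFinset.erase (a.getD i 0))))
          (.gen γ a b))
        (.gen γ (a.set i x) b)
  -- NMT-right
  | nmt_right (γ : S.gen) (a b : List Name) (i : ℕ) (hi : i < b.length) (x : Name)
      (hx : x ∉ b) :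
      NEq S E
        (.seq (.gen γ a b)
          (.tens (idOf (b.toFinset.erase (b.getD i 0))) (.delta (b.getD i 0) x)))
        (.gen γ a (b.set i x))

/-- The base nominal monoidal theory (no extra equations). -/
def NEq₀ (S : NSig) : NTrm S → NTrm S → Prop := NEq S fun _ _ => False

/-- `X` supports the `α`-equivalence class of a term `t`. -/
def TSupports (S : NSig) (X : Set Name) (t : NTrm S) : Prop :=
  ∀ π : FinPerm, (∀ a ∈ X, π • a = a) → NEq₀ S (.pact π t) t

/-- The minimal support of the equivalence class of a term. -/
def msupp (S : NSig) (t : NTrm S) : Set Name :=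
  ⋂₀ {X : Set Name | TSupports S X t}

/-!
Structural induction on `t`. Renaming terms `⨄ δ_{aᵢbᵢ}` do not depend on the order of
their factors and compose pointwise by `δ_{ab} ; δ_{bc} = δ_{ac}`, so `π_A ; π_A⁻¹ = id_A`,
`σ_A ; π_{σ[A]} = (πσ)_A` and `π_{A ⊎ B} = π_A ⊎ π_B`; with interchange these settle the cases
of `;`, of the action and of `⊎`. For a generator `[a⟩γ⟨b]`, NMT-left/right can only rename one
interface name at a time, and only to a fresh one; the simultaneous renaming `a ↦ π a` is
reached by renaming `a`, position by position, into a list of names fresh for `a` and `π a`,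
and then that list into `π a`.
-/

namespace List

theorem exists_nodup_length_forall_notMem {α : Type*} [DecidableEq α] [Infinite α]
    (l : List α) (n : ℕ) :
    ∃ y : List α, y.length = n ∧ y.Nodup ∧ ∀ x ∈ y, x ∉ l := by
  induction n with
  | zero => exact ⟨[], rfl, nodup_nil, by simp⟩
  | succ n ih =>
    obtain ⟨y, hlen, hnd, hfresh⟩ := ih
    obtain ⟨x, hx⟩ := Infinite.exists_notMem_finset (l ++ y).toFinset
    simp only [mem_toFinset, mem_append, not_or] at hx
    exact ⟨x :: y, by simp [hlen], nodup_cons.2 ⟨hx.2, hnd⟩,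
      by simpa [hx.1] using hfresh⟩

theorem Nodup.rel_of_set {α : Type*} [DecidableEq α] [Infinite α] {P : List α → List α → Prop}
    (refl : ∀ l, l.Nodup → P l l)
    (trans : ∀ {l m n}, l.length = m.length → m.length = n.length → P l m → P m n → P l n)
    (step : ∀ {l} i x, l.Nodup → i < l.length → x ∉ l → P l (l.set i x))
    {a b : List α} (ha : a.Nodup) (hb : b.Nodup) (hab : a.length = b.length) : P a b := by
  have of_disjoint : ∀ (b a p : List α), a.length = b.length → (p ++ a ++ b).Nodup →
      P (p ++ a) (p ++ b) := by
    intro b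
    induction b with
    | nil =>
      intro a p hlen hnd
      obtain rfl := length_eq_zero_iff.1 hlen
      exact refl _ (by simpa using hnd)
    | cons y b ih =>
      rintro (_ | ⟨x, a⟩) p hlen hnd
      · simp at hlen
      have hnd' : (p ++ x :: a).Nodup ∧ y ∉ p ++ x :: a ∧ (p ++ [y] ++ a ++ b).Nodup := by
        simp only [nodup_append, nodup_cons, mem_append, mem_cons] at hnd ⊢
        grind
      have first : P (p ++ x :: a) (p ++ y :: a) := by
        simpa using step p.length y hnd'.1 (by simp) hnd'.2.1
      have rest : P (p ++ y :: a) (p ++ y :: b) := by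
        simpa using ih a (p ++ [y]) (by simpa using hlen) hnd'.2.2
      exact trans (by simp) (by simpa using hlen) first rest
  obtain ⟨y, hy_len, hy_nd, hy_fresh⟩ := exists_nodup_length_forall_notMem (a ++ b) a.length
  have hay : (a ++ y).Nodup := nodup_append.2 ⟨ha, hy_nd, fun u hu v hv huv =>
    hy_fresh v hv (mem_append_left _ (huv ▸ hu))⟩
  have hyb : (y ++ b).Nodup := nodup_append.2 ⟨hy_nd, hb, fun u hu v hv huv =>
    hy_fresh u hu (mem_append_right _ (huv ▸ hv))⟩
  exact trans hy_len.symm (hy_len.trans hab)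
    (of_disjoint y a [] hy_len.symm (by simpa using hay))
    (of_disjoint b y [] (hy_len.trans hab) (by simpa using hyb))

theorem set_zip_perm {α : Type*} {l : List α} {i : ℕ} (hi : i < l.length) (x : α) :
    (l.set i x).zip l ~ (x, l[i]) :: (l.eraseIdx i).zip (l.eraseIdx i) := by
  have middle : ∀ (T D : List α) (y : α),
      (T ++ x :: D).zip (T ++ y :: D) ~ (x, y) :: (T ++ D).zip (T ++ D) := by
    intro T D y
    rw [zip_append rfl, zip_append rfl]
    exact perm_middle
  have hl : l = take i l ++ l[i] :: drop (i + 1) l := by simp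
  have h := middle (take i l) (drop (i + 1) l) l[i]
  have hset : l.set i x = take i l ++ x :: drop (i + 1) l := by
    simp [set_eq_take_append_cons_drop, hi]
  rwa [← hl, ← eraseIdx_eq_take_drop_succ, ← hset] at h

theorem Nodup.toFinset_eraseIdx {α : Type*} [DecidableEq α] {l : List α} (hl : l.Nodup)
    {i : ℕ} (hi : i < l.length) : (l.eraseIdx i).toFinset = l.toFinset.erase l[i] := by
  rw [← hl.erase_getElem i hi]
  ext
  simp [hl.mem_erase_iff]

end List

section Renamings

variable {S : NSig} {E : NTrm S → NTrm S → Prop}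

local notation:50 s " ≋ " t => NEq S E s t

instance : @Trans (NTrm S) (NTrm S) (NTrm S) (NEq S E) (NEq S E) (NEq S E) := ⟨NEq.trans⟩


theorem NEq.seq_unit_unit : .seq .unit .unit ≋ .unit := by
  simpa [NTrm.dom, idOf] using NEq.seq_id_left (E := E) NTrm.unit

theorem renOf_append (l₁ l₂ : List (Name × Name)) :
    renOf (l₁ ++ l₂) ≋ .tens (renOf l₁) (renOf l₂) := by
  induction l₁ with
  | nil => exact (NEq.tens_unit_left _).symm
  | cons p l ih => exact ((NEq.refl _).congr_tens ih).trans (NEq.tens_assoc _ _ _).symm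

theorem renOf_perm {l l' : List (Name × Name)} (h : l.Perm l') : renOf l ≋ renOf l' := by
  induction h with
  | nil => exact .refl _
  | cons p _ ih => exact (NEq.refl _).congr_tens ih
  | swap p q l =>
    calc _ ≋ .tens (.tens (.delta q.1 q.2) (.delta p.1 p.2)) (renOf l) :=
          (NEq.tens_assoc _ _ _).symm
      _ ≋ .tens (.tens (.delta p.1 p.2) (.delta q.1 q.2)) (renOf l) :=
        (NEq.tens_comm _ _).congr_tens (.refl _)
      _ ≋ _ := NEq.tens_assoc _ _ _
  | trans _ _ ih₁ ih₂ => exact ih₁.trans ih₂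

theorem seq_renOf_zip {l m n : List Name} (hlm : l.length = m.length)
    (hmn : m.length = n.length) : .seq (renOf (l.zip m)) (renOf (m.zip n)) ≋ renOf (l.zip n) :=
  match l, m, n, hlm, hmn with
  | [], [], [], _, _ => NEq.seq_unit_unit
  | a :: _, b :: _, c :: _, hlm, hmn =>
    (NEq.interchange _ _ _ _).trans <| (NEq.delta_comp a b c).congr_tens <|
      seq_renOf_zip (Nat.succ.inj hlm) (Nat.succ.inj hmn)

theorem seq_renOf_map (l : List Name) (f g h : Name → Name) :
    .seq (renOf (l.map fun a => (f a, g a))) (renOf (l.map fun a => (g a, h a))) ≋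
      renOf (l.map fun a => (f a, h a)) := by
  simpa only [List.zip_map'] using seq_renOf_zip (E := E) (l := l.map f) (m := l.map g)
    (n := l.map h) (by simp) (by simp)

theorem renOf_map_diag (l : List Name) :
    renOf (l.map fun a => (a, a)) ≋ (l.map NTrm.idt).foldr .tens .unit := by
  induction l with
  | nil => exact .refl _
  | cons a l ih => exact (NEq.delta_id a).congr_tens ih

theorem renOf_zip_self {l : List Name} (hl : l.Nodup) : renOf (l.zip l) ≋ idOf l.toFinset := by
  have hdiag : l.zip l = l.map fun a => (a, a) := by
    simpa using List.zip_map' (f := id) (g := id) (l := l)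
  rw [hdiag]
  exact (renOf_perm ((List.toFinset_toList hl).symm.map _)).trans (renOf_map_diag _)

theorem renOf_toList_union (f : Name → Name × Name) {A B : Finset Name} (hd : Disjoint A B) :
    renOf ((A ∪ B).toList.map f) ≋ .tens (renOf (A.toList.map f)) (renOf (B.toList.map f)) := by
  have hperm : (A ∪ B).toList.Perm (A.toList ++ B.toList) := by
    apply List.perm_of_nodup_nodup_toFinset_eq (Finset.nodup_toList _)
    · exact A.nodup_toList.append B.nodup_toList
        (List.disjoint_toFinset_iff_disjoint.1 (by simpa using hd))
    · simp
  refine (renOf_perm (hperm.map f)).trans ?_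
  rw [List.map_append]
  exact renOf_append _ _

theorem renOf_toList_smul (f : Name → Name × Name) (σ : FinPerm) (A : Finset Name) :
    renOf ((σ • A).toList.map f) ≋ renOf (A.toList.map fun a => f (σ • a)) := by
  have hperm : (σ • A).toList.Perm (A.toList.map (σ • ·)) := by
    apply List.perm_of_nodup_nodup_toFinset_eq (Finset.nodup_toList _)
      ((Finset.nodup_toList A).map (MulAction.injective σ))
    ext
    simp [Finset.smul_finset_def]
  simpa [Function.comp_def] using renOf_perm (hperm.map f)

theorem permTermOf_seq_permTermInv (π : FinPerm) (A : Finset Name) :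
    .seq (permTermOf π A) (permTermInv π A) ≋ idOf A :=
  (seq_renOf_map A.toList id (π • ·) id).trans (renOf_map_diag A.toList)

theorem permTermInv_smul_seq (π σ : FinPerm) (A : Finset Name) :
    .seq (permTermInv π (σ • A)) (permTermInv σ A) ≋ permTermInv (π * σ) A :=
  ((renOf_toList_smul _ σ A).congr_seq (.refl _)).trans
    (seq_renOf_map A.toList ((π * σ) • ·) (σ • ·) id)

theorem permTermOf_seq_smul (π σ : FinPerm) (A : Finset Name) :
    .seq (permTermOf σ A) (permTermOf π (σ • A)) ≋ permTermOf (π * σ) A :=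
  ((NEq.refl _).congr_seq (renOf_toList_smul _ σ A)).trans
    (seq_renOf_map A.toList id (σ • ·) ((π * σ) • ·))

theorem renOf_set_zip {l : List Name} (hl : l.Nodup) {i : ℕ} (hi : i < l.length) (x : Name) :
    renOf ((l.set i x).zip l) ≋
      .tens (.delta x (l.getD i 0)) (idOf (l.toFinset.erase (l.getD i 0))) := by
  rw [List.getD_eq_getElem _ _ hi, ← hl.toFinset_eraseIdx hi]
  exact (renOf_perm (List.set_zip_perm hi x)).trans
    ((NEq.refl _).congr_tens (renOf_zip_self (hl.eraseIdx i)))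

theorem renOf_zip_set {l : List Name} (hl : l.Nodup) {i : ℕ} (hi : i < l.length) (x : Name) :
    renOf (l.zip (l.set i x)) ≋
      .tens (idOf (l.toFinset.erase (l.getD i 0))) (.delta (l.getD i 0) x) := by
  have hperm := (List.set_zip_perm hi x).map Prod.swap
  rw [List.zip_swap, List.map_cons, List.zip_swap] at hperm
  rw [List.getD_eq_getElem _ _ hi, ← hl.toFinset_eraseIdx hi]
  exact (renOf_perm hperm).trans
    (((NEq.refl _).congr_tens (renOf_zip_self (hl.eraseIdx i))).trans (NEq.tens_comm _ _))

theorem seq_renOf_gen_set (γ : S.gen) (b : List Name) {l : List Name} (hl : l.Nodup) {i : ℕ}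
    (hi : i < l.length) {x : Name} (hx : x ∉ l) :
    .seq (renOf ((l.set i x).zip l)) (.gen γ l b) ≋ .gen γ (l.set i x) b :=
  ((renOf_set_zip hl hi x).congr_seq (.refl _)).trans (NEq.nmt_left γ l b i hi x hx)

theorem gen_seq_renOf_set (γ : S.gen) (a : List Name) {l : List Name} (hl : l.Nodup) {i : ℕ}
    (hi : i < l.length) {x : Name} (hx : x ∉ l) :
    .seq (.gen γ a l) (renOf (l.zip (l.set i x))) ≋ .gen γ a (l.set i x) :=
  ((NEq.refl _).congr_seq (renOf_zip_set hl hi x)).trans (NEq.nmt_right γ a l i hi x hx)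

theorem seq_renOf_gen (γ : S.gen) (b : List Name) {a a' : List Name} (ha : a.Nodup)
    (ha' : a'.Nodup) (hlen : a.length = a'.length) :
    .seq (renOf (a'.zip a)) (.gen γ a b) ≋ .gen γ a' b := by
  refine List.Nodup.rel_of_set
    (P := fun c d => .seq (renOf (d.zip c)) (.gen γ c b) ≋ .gen γ d b)
    (fun l hl => ((renOf_zip_self hl).congr_seq (.refl _)).trans (NEq.seq_id_left (.gen γ l b)))
    (fun {l m n} hlm hmn hl hm => ?_) (fun i x hl hi hx => seq_renOf_gen_set γ b hl hi hx)
    ha ha' hlen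
  calc .seq (renOf (n.zip l)) (.gen γ l b)
      ≋ .seq (.seq (renOf (n.zip m)) (renOf (m.zip l))) (.gen γ l b) :=
        (seq_renOf_zip hmn.symm hlm.symm).symm.congr_seq (.refl _)
    _ ≋ .seq (renOf (n.zip m)) (.seq (renOf (m.zip l)) (.gen γ l b)) := NEq.seq_assoc _ _ _
    _ ≋ .seq (renOf (n.zip m)) (.gen γ m b) := (NEq.refl _).congr_seq hl
    _ ≋ .gen γ n b := hm

theorem gen_seq_renOf (γ : S.gen) (a : List Name) {b b' : List Name} (hb : b.Nodup)
    (hb' : b'.Nodup) (hlen : b.length = b'.length) :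
    .seq (.gen γ a b) (renOf (b.zip b')) ≋ .gen γ a b' := by
  refine List.Nodup.rel_of_set
    (P := fun c d => .seq (.gen γ a c) (renOf (c.zip d)) ≋ .gen γ a d)
    (fun l hl => ((NEq.refl _).congr_seq (renOf_zip_self hl)).trans
      (NEq.seq_id_right (.gen γ a l)))
    (fun {l m n} hlm hmn hl hm => ?_) (fun i x hl hi hx => gen_seq_renOf_set γ a hl hi hx)
    hb hb' hlen
  calc .seq (.gen γ a l) (renOf (l.zip n))
      ≋ .seq (.gen γ a l) (.seq (renOf (l.zip m)) (renOf (m.zip n))) :=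
        (NEq.refl _).congr_seq (seq_renOf_zip hlm hmn).symm
    _ ≋ .seq (.seq (.gen γ a l) (renOf (l.zip m))) (renOf (m.zip n)) :=
        (NEq.seq_assoc _ _ _).symm
    _ ≋ .seq (.gen γ a m) (renOf (m.zip n)) := hl.congr_seq (.refl _)
    _ ≋ .gen γ a n := hm

theorem permTermInv_toFinset (π : FinPerm) {l : List Name} (hl : l.Nodup) :
    permTermInv π l.toFinset ≋ renOf ((l.map (π • ·)).zip l) := by
  rw [show (l.map (π • ·)).zip l = l.map fun a => (π • a, a) by
    simpa using List.zip_map' (f := (π • ·)) (g := id) (l := l)]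
  exact renOf_perm ((List.toFinset_toList hl).map _)

theorem permTermOf_toFinset (π : FinPerm) {l : List Name} (hl : l.Nodup) :
    permTermOf π l.toFinset ≋ renOf (l.zip (l.map (π • ·))) := by
  rw [show l.zip (l.map (π • ·)) = l.map fun a => (a, π • a) by
    simpa using List.zip_map' (f := id) (g := (π • ·)) (l := l)]
  exact renOf_perm ((List.toFinset_toList hl).map _)

theorem permTermInv_singleton (π : FinPerm) (a : Name) :
    permTermInv π {a} ≋ .delta (π • a) a := by
  simpa [permTermInv, renOf] using NEq.tens_unit_right (E := E) (.delta (π • a) a)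

theorem permTermOf_singleton (π : FinPerm) (a : Name) :
    permTermOf π {a} ≋ .delta a (π • a) := by
  simpa [permTermOf, renOf] using NEq.tens_unit_right (E := E) (.delta a (π • a))

end Renamings

section Conjugation

variable {S : NSig} (E : NTrm S → NTrm S → Prop)

def PactEqConj (π : FinPerm) (t : NTrm S) : Prop :=
  NEq S E (.pact π t) (.seq (permTermInv π t.dom) (.seq t (permTermOf π t.cod)))

variable {E}

local notation:50 s " ≋ " t => NEq S E s t


namespace PactEqConj

theorem gen (π : FinPerm) (γ : S.gen) {a b : List Name} (ha : a.Nodup) (hb : b.Nodup) :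
    PactEqConj E π (.gen γ a b) := by
  have ha' := ha.map (MulAction.injective π)
  have hb' := hb.map (MulAction.injective π)
  refine (NEq.pact_gen π γ a b).trans (NEq.symm ?_)
  calc .seq (permTermInv π a.toFinset) (.seq (.gen γ a b) (permTermOf π b.toFinset))
      ≋ .seq (renOf ((a.map (π • ·)).zip a))
          (.seq (.gen γ a b) (renOf (b.zip (b.map (π • ·))))) :=
        (permTermInv_toFinset π ha).congr_seq
          ((NEq.refl _).congr_seq (permTermOf_toFinset π hb))
    _ ≋ .seq (renOf ((a.map (π • ·)).zip a)) (.gen γ a (b.map (π • ·))) :=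
        (NEq.refl _).congr_seq (gen_seq_renOf γ a hb hb' (by simp))
    _ ≋ .gen γ (a.map (π • ·)) (b.map (π • ·)) := seq_renOf_gen γ _ ha ha' (by simp)

theorem delta (π : FinPerm) (a b : Name) : PactEqConj E π (.delta a b) := by
  refine (NEq.pact_delta π a b).trans (NEq.symm ?_)
  calc .seq (permTermInv π {a}) (.seq (.delta a b) (permTermOf π {b}))
      ≋ .seq (.delta (π • a) a) (.seq (.delta a b) (.delta b (π • b))) :=
        (permTermInv_singleton π a).congr_seq
          ((NEq.refl _).congr_seq (permTermOf_singleton π b))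
    _ ≋ .seq (.delta (π • a) a) (.delta a (π • b)) :=
        (NEq.refl _).congr_seq (NEq.delta_comp _ _ _)
    _ ≋ .delta (π • a) (π • b) := NEq.delta_comp _ _ _

theorem idt (π : FinPerm) (a : Name) : PactEqConj E π (.idt a) :=
  ((NEq.delta_id a).symm.congr_pact π).trans <|
    (delta π a a).trans ((NEq.refl _).congr_seq ((NEq.delta_id a).congr_seq (.refl _)))

theorem unit (π : FinPerm) : PactEqConj E π .unit := by
  have hinv : (permTermInv π ∅ : NTrm S) = .unit := by simp [permTermInv, renOf]
  have hof : (permTermOf π ∅ : NTrm S) = .unit := by simp [permTermOf, renOf]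
  refine (NEq.pact_unit π).trans (NEq.symm ?_)
  change .seq (permTermInv π ∅) (.seq .unit (permTermOf π ∅)) ≋ .unit
  rw [hinv, hof]
  exact ((NEq.refl _).congr_seq NEq.seq_unit_unit).trans NEq.seq_unit_unit

theorem tens {π : FinPerm} {s t : NTrm S} (hs : PactEqConj E π s) (ht : PactEqConj E π t)
    (hdom : Disjoint s.dom t.dom) (hcod : Disjoint s.cod t.cod) :
    PactEqConj E π (.tens s t) :=
  calc .pact π (.tens s t)
      ≋ .tens (.pact π s) (.pact π t) := NEq.pact_tens _ _ _
    _ ≋ .tens (.seq (permTermInv π s.dom) (.seq s (permTermOf π s.cod)))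
          (.seq (permTermInv π t.dom) (.seq t (permTermOf π t.cod))) := hs.congr_tens ht
    _ ≋ .seq (.tens (permTermInv π s.dom) (permTermInv π t.dom))
          (.tens (.seq s (permTermOf π s.cod)) (.seq t (permTermOf π t.cod))) :=
        (NEq.interchange _ _ _ _).symm
    _ ≋ .seq (.tens (permTermInv π s.dom) (permTermInv π t.dom))
          (.seq (.tens s t) (.tens (permTermOf π s.cod) (permTermOf π t.cod))) :=
        (NEq.refl _).congr_seq (NEq.interchange _ _ _ _).symm
    _ ≋ .seq (permTermInv π (s.dom ∪ t.dom))
          (.seq (.tens s t) (permTermOf π (s.cod ∪ t.cod))) :=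
        (renOf_toList_union _ hdom).symm.congr_seq
          ((NEq.refl _).congr_seq (renOf_toList_union _ hcod).symm)

theorem seq {π : FinPerm} {s t : NTrm S} (hs : PactEqConj E π s) (ht : PactEqConj E π t)
    (hst : s.cod = t.dom) : PactEqConj E π (.seq s t) := by
  have cancel : .seq (permTermOf π s.cod) (permTermInv π t.dom) ≋ idOf t.dom :=
    hst ▸ permTermOf_seq_permTermInv π s.cod
  set I := permTermInv π s.dom
  set O := permTermOf π t.cod
  calc .pact π (.seq s t)
      ≋ .seq (.pact π s) (.pact π t) := NEq.pact_seq _ _ _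
    _ ≋ .seq (.seq I (.seq s (permTermOf π s.cod))) (.seq (permTermInv π t.dom) (.seq t O)) :=
        hs.congr_seq ht
    _ ≋ .seq I (.seq s (.seq (permTermOf π s.cod) (.seq (permTermInv π t.dom) (.seq t O)))) :=
        (NEq.seq_assoc _ _ _).trans ((NEq.refl _).congr_seq (NEq.seq_assoc _ _ _))
    _ ≋ .seq I (.seq s (.seq (idOf t.dom) (.seq t O))) :=
        (NEq.refl _).congr_seq <| (NEq.refl _).congr_seq <|
          (NEq.seq_assoc _ _ _).symm.trans (cancel.congr_seq (.refl _))
    _ ≋ .seq I (.seq (.seq s t) O) :=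
        (NEq.refl _).congr_seq <|
          ((NEq.refl _).congr_seq (NEq.seq_id_left _)).trans (NEq.seq_assoc _ _ _).symm

theorem pact {π σ : FinPerm} {t : NTrm S} (hπσ : PactEqConj E (π * σ) t)
    (hσ : PactEqConj E σ t) : PactEqConj E π (.pact σ t) := by
  set A := t.dom
  set B := t.cod
  calc .pact π (.pact σ t)
      ≋ .pact (π * σ) t := (NEq.pact_mul _ _ _).symm
    _ ≋ .seq (permTermInv (π * σ) A) (.seq t (permTermOf (π * σ) B)) := hπσ
    _ ≋ .seq (.seq (permTermInv π (σ • A)) (permTermInv σ A))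
          (.seq t (.seq (permTermOf σ B) (permTermOf π (σ • B)))) :=
        (permTermInv_smul_seq π σ A).symm.congr_seq
          ((NEq.refl _).congr_seq (permTermOf_seq_smul π σ B).symm)
    _ ≋ .seq (permTermInv π (σ • A))
          (.seq (.seq (permTermInv σ A) (.seq t (permTermOf σ B))) (permTermOf π (σ • B))) :=
        (NEq.seq_assoc _ _ _).trans <| (NEq.refl _).congr_seq <|
          ((NEq.refl _).congr_seq (NEq.seq_assoc _ _ _).symm).trans (NEq.seq_assoc _ _ _).symm
    _ ≋ .seq (permTermInv π (σ • A)) (.seq (.pact σ t) (permTermOf π (σ • B))) :=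
        (NEq.refl _).congr_seq (hσ.symm.congr_seq (.refl _))

end PactEqConj

end Conjugation

/-- In any nominal monoidal theory, the permutation-action
and `δ` equations entail `π·t = π_A⁻¹ ; t ; π_B` for every term `t : A → B`. -/
theorem stmt10 {S : NSig} (t : NTrm S) (π : FinPerm) (h : t.WF) :
    NEq₀ S (.pact π t) (.seq (permTermInv π t.dom) (.seq t (permTermOf π t.cod))) := by
  induction t generalizing π with
  | gen γ a b => exact PactEqConj.gen π γ h.1 h.2.1
  | idt a => exact PactEqConj.idt π a
  | delta a b => exact PactEqConj.delta π a b
  | unit => exact PactEqConj.unit π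
  | tens s t ihs iht => exact PactEqConj.tens (ihs π h.1) (iht π h.2.1) h.2.2.1 h.2.2.2
  | seq s t ihs iht => exact PactEqConj.seq (ihs π h.1) (iht π h.2.1) h.2.2
  | pact σ t ih => exact PactEqConj.pact (ih (π * σ) h) (ih σ h)
end

section
/- Sequential composition in a nominal monoidal theory binds internal names: for composable terms t : A → C and s : C → B, the support of the α-equivalence class of t ; s is contained in A ∪ B; in particular names in C \ (A ∪ B) are not in the support of t ; s. -/
open MulAction

open Pointwise

/-!
The permutation action on a well-formed term `t : A → C` is conjugation by renamings,
`π · t = π⁻¹_A ; t ; π_C`, proved by induction on `t`. For a generator `[a⟩γ⟨b]` the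
renamings are absorbed one wire at a time by NMT-left and NMT-right, which only rename a wire
to a name not already on the generator; so `π⁻¹_a` is factored through the fresh names `a + N`,
which clash neither with `a` nor with `π • a`. When `π` fixes `A ∪ C` both renamings are
identities, so `A ∪ C` supports `t`; for `t ; s : A → B` this set is `A ∪ B`.
-/

lemma Finset.toList_union_perm {α : Type*} [DecidableEq α] {A B : Finset α} (h : Disjoint A B) :
    (A ∪ B).toList.Perm (A.toList ++ B.toList) := by
  refine List.perm_of_nodup_nodup_toFinset_eq (Finset.nodup_toList _)
    (List.nodup_append.2 ⟨Finset.nodup_toList _, Finset.nodup_toList _, ?_⟩) (by ext; simp)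
  intro x hx y hy
  exact h.forall_ne_finset (Finset.mem_toList.1 hx) (Finset.mem_toList.1 hy)

lemma Finset.toList_smul_perm {G α : Type*} [Group G] [MulAction G α] [DecidableEq α] (g : G)
    (A : Finset α) : (g • A).toList.Perm (A.toList.map (g • ·)) := by
  refine List.perm_of_nodup_nodup_toFinset_eq (Finset.nodup_toList _)
    ((Finset.nodup_toList _).map (MulAction.injective g)) ?_
  ext x
  simp [Finset.mem_smul_finset]

lemma List.toFinset_erase_of_nodup_middle {α : Type*} [DecidableEq α] {d l : List α} {a : α}
    (h : (d ++ a :: l).Nodup) : (d ++ a :: l).toFinset.erase a = d.toFinset ∪ l.toFinset := by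
  simp only [List.nodup_append, List.nodup_cons, List.mem_cons] at h
  ext y
  simp only [Finset.mem_erase, List.toFinset_append, List.toFinset_cons, Finset.mem_union,
    Finset.mem_insert, List.mem_toFinset]
  grind

lemma List.disjoint_toFinset_of_nodup_middle {α : Type*} [DecidableEq α] {d l : List α} {a : α}
    (h : (d ++ a :: l).Nodup) : _root_.Disjoint d.toFinset l.toFinset := by
  simp only [List.nodup_append, List.nodup_cons, List.mem_cons] at h
  rw [Finset.disjoint_left]
  simp only [List.mem_toFinset]
  grind

lemma List.nodup_map_append_map {α β : Type*} {l : List α} (hl : l.Nodup) {f g : α → β}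
    (hf : f.Injective) (hg : g.Injective) (hfg : ∀ x ∈ l, ∀ y ∈ l, f x ≠ g y) :
    (l.map f ++ l.map g).Nodup := by
  refine List.nodup_append.2 ⟨hl.map hf, hl.map hg, ?_⟩
  simp only [List.mem_map]
  rintro _ ⟨x, hx, rfl⟩ _ ⟨y, hy, rfl⟩
  exact hfg x hx y hy

lemma Finset.exists_forall_add_notMem (F : Finset ℕ) : ∃ N : ℕ, ∀ y, y + N ∉ F :=
  ⟨F.sup id + 1, fun y hy => by
    have : y + (F.sup id + 1) ≤ F.sup id := Finset.le_sup (f := id) hy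
    omega⟩

lemma exists_nodup_shift {a : List ℕ} (ha : a.Nodup) {f : ℕ → ℕ} (hf : f.Injective) :
    ∃ N : ℕ, (a.map (· + N) ++ a).Nodup ∧ (a.map f ++ a.map (· + N)).Nodup := by
  obtain ⟨N, hN⟩ := Finset.exists_forall_add_notMem (a.toFinset ∪ (a.map f).toFinset)
  refine ⟨N, ?_, ?_⟩
  · simpa using List.nodup_map_append_map ha (add_left_injective N) Function.injective_id
      fun x _ y hy h => hN x (by simp [h, hy])
  · refine List.nodup_map_append_map ha hf (add_left_injective N) fun x hx y _ h => hN y ?_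
    simp only [← h, Finset.mem_union, List.mem_toFinset, List.mem_map]
    exact Or.inr ⟨x, hx, rfl⟩

namespace NTrm

variable {S : NSig}

local infixl:70 " ⊎ " => NTrm.tens
local infixl:65 " ⨾ " => NTrm.seq
local notation:50 a " ≋ " b => NEq₀ S a b

instance : Trans (NEq₀ S) (NEq₀ S) (NEq₀ S) := ⟨NEq.trans⟩

def tensList (l : List (NTrm S)) : NTrm S := l.foldr .tens .unit

@[simp] lemma tensList_cons (t : NTrm S) (l : List (NTrm S)) :
    tensList (t :: l) = t ⊎ tensList l := rfl

lemma renOf_eq_tensList (l : List (Name × Name)) :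
    (renOf l : NTrm S) = tensList (l.map fun p => .delta p.1 p.2) := rfl

lemma idOf_eq_tensList (A : Finset Name) :
    (idOf A : NTrm S) = tensList (A.toList.map .idt) := rfl

@[simp] lemma renOf_nil : (renOf [] : NTrm S) = .unit := rfl

@[simp] lemma renOf_cons (p : Name × Name) (l : List (Name × Name)) :
    (renOf (p :: l) : NTrm S) = .delta p.1 p.2 ⊎ renOf l := rfl

@[simp] lemma idOf_empty : (idOf ∅ : NTrm S) = .unit := by
  simp [idOf_eq_tensList, tensList]

@[simp] lemma permTermInv_empty (π : FinPerm) : (permTermInv π ∅ : NTrm S) = .unit := by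
  rw [permTermInv, Finset.toList_empty]; rfl

@[simp] lemma permTermOf_empty (π : FinPerm) : (permTermOf π ∅ : NTrm S) = .unit := by
  rw [permTermOf, Finset.toList_empty]; rfl

lemma dom_renOf (l : List (Name × Name)) :
    (renOf l : NTrm S).dom = (l.map Prod.fst).toFinset := by
  induction l with
  | nil => rfl
  | cons p l ih => simp [dom, ih]

lemma cod_renOf (l : List (Name × Name)) :
    (renOf l : NTrm S).cod = (l.map Prod.snd).toFinset := by
  induction l with
  | nil => rfl
  | cons p l ih => simp [cod, ih]

lemma dom_tensList_map_idt (l : List Name) :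
    (tensList (l.map .idt) : NTrm S).dom = l.toFinset := by
  induction l with
  | nil => rfl
  | cons a l ih => simp [dom, ih]

@[simp] lemma dom_idOf (A : Finset Name) : (idOf A : NTrm S).dom = A := by
  rw [idOf_eq_tensList, dom_tensList_map_idt, Finset.toList_toFinset]

lemma seq_idOf_left {A : Finset Name} {t : NTrm S} (h : t.dom = A) : idOf A ⨾ t ≋ t := by
  subst h; exact NEq.seq_id_left t

lemma seq_idOf_right {A : Finset Name} {t : NTrm S} (h : t.cod = A) : t ⨾ idOf A ≋ t := by
  subst h; exact NEq.seq_id_right t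

lemma unit_seq_unit : (.unit : NTrm S) ⨾ .unit ≋ .unit := by
  simpa using seq_idOf_left (S := S) (A := ∅) (t := .unit) rfl

lemma tens_left_comm (t u v : NTrm S) : t ⊎ (u ⊎ v) ≋ u ⊎ (t ⊎ v) :=
  calc t ⊎ (u ⊎ v) ≋ (t ⊎ u) ⊎ v := NEq.symm (NEq.tens_assoc _ _ _)
    _ ≋ (u ⊎ t) ⊎ v := NEq.congr_tens (NEq.tens_comm _ _) (NEq.refl _)
    _ ≋ u ⊎ (t ⊎ v) := NEq.tens_assoc _ _ _

lemma idOf_tens_seq (D : Finset Name) (t u : NTrm S) :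
    idOf D ⊎ (t ⨾ u) ≋ (idOf D ⊎ t) ⨾ (idOf D ⊎ u) :=
  NEq.symm <| NEq.trans (NEq.interchange _ _ _ _) <|
    NEq.congr_tens (seq_idOf_left (dom_idOf D)) (NEq.refl _)

lemma tens_equiv_seq_idOf_left (t u : NTrm S) :
    t ⊎ u ≋ (idOf t.dom ⊎ u) ⨾ (t ⊎ idOf u.cod) :=
  NEq.symm <| NEq.trans (NEq.interchange _ _ _ _) <|
    NEq.congr_tens (seq_idOf_left rfl) (seq_idOf_right rfl)

lemma tens_equiv_seq_idOf_right (t u : NTrm S) :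
    t ⊎ u ≋ (t ⊎ idOf u.dom) ⨾ (idOf t.cod ⊎ u) :=
  NEq.symm <| NEq.trans (NEq.interchange _ _ _ _) <|
    NEq.congr_tens (seq_idOf_right rfl) (seq_idOf_left rfl)

lemma tensList_congr_map {α : Type*} (l : List α) {f g : α → NTrm S}
    (hfg : ∀ x ∈ l, f x ≋ g x) : tensList (l.map f) ≋ tensList (l.map g) := by
  induction l with
  | nil => exact NEq.refl _
  | cons x l ih => exact NEq.congr_tens (hfg x (by simp)) (ih fun y hy => hfg y (by simp [hy]))

lemma tensList_perm {l l' : List (NTrm S)} (h : l.Perm l') : tensList l ≋ tensList l' := by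
  induction h with
  | nil => exact NEq.refl _
  | cons t _ ih => exact NEq.congr_tens (NEq.refl _) ih
  | swap t u l => exact tens_left_comm _ _ _
  | trans _ _ ih₁ ih₂ => exact NEq.trans ih₁ ih₂

lemma tensList_append (l l' : List (NTrm S)) :
    tensList (l ++ l') ≋ tensList l ⊎ tensList l' := by
  induction l with
  | nil => exact NEq.symm (NEq.tens_unit_left _)
  | cons t l ih =>
    exact NEq.trans (NEq.congr_tens (NEq.refl t) ih) (NEq.symm (NEq.tens_assoc _ _ _))

lemma seq_tensList_map {α : Type*} (l : List α) {f g h : α → NTrm S}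
    (hfg : ∀ x ∈ l, f x ⨾ g x ≋ h x) :
    tensList (l.map f) ⨾ tensList (l.map g) ≋ tensList (l.map h) := by
  induction l with
  | nil => exact unit_seq_unit
  | cons x l ih =>
    exact NEq.trans (NEq.interchange _ _ _ _) <|
      NEq.congr_tens (hfg x (by simp)) (ih fun y hy => hfg y (by simp [hy]))

lemma tensList_toList_union (f : Name → NTrm S) {A B : Finset Name} (h : Disjoint A B) :
    tensList ((A ∪ B).toList.map f) ≋
      tensList (A.toList.map f) ⊎ tensList (B.toList.map f) := by
  refine NEq.trans (tensList_perm ((Finset.toList_union_perm h).map f)) ?_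
  rw [List.map_append]
  exact tensList_append _ _

lemma tensList_toList_smul (f : Name → NTrm S) (π : FinPerm) (A : Finset Name) :
    tensList ((π • A).toList.map f) ≋ tensList (A.toList.map fun a => f (π • a)) := by
  have h := tensList_perm ((Finset.toList_smul_perm π A).map f)
  rwa [List.map_map] at h

lemma idOf_union {A B : Finset Name} (h : Disjoint A B) :
    (idOf (A ∪ B) : NTrm S) ≋ idOf A ⊎ idOf B :=
  tensList_toList_union _ h

lemma idOf_tens_idOf_singleton_tens {d : List Name} {x : Name} (h : x ∉ d) (t : NTrm S) :
    idOf d.toFinset ⊎ (idOf {x} ⊎ t) ≋ idOf (d ++ [x]).toFinset ⊎ t := by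
  have hdx : Disjoint d.toFinset {x} := by simpa using h
  refine NEq.trans (NEq.symm (NEq.tens_assoc _ _ _)) (NEq.congr_tens ?_ (NEq.refl _))
  rw [show (d ++ [x]).toFinset = d.toFinset ∪ {x} by ext; simp]
  exact NEq.symm (idOf_union hdx)

lemma renOf_perm {l l' : List (Name × Name)} (h : l.Perm l') : (renOf l : NTrm S) ≋ renOf l' :=
  tensList_perm (h.map _)

lemma renOf_map_seq {α : Type*} (l : List α) (f g h : α → Name) :
    renOf (l.map fun x => (f x, g x)) ⨾ renOf (l.map fun x => (g x, h x)) ≋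
      renOf (l.map fun x => (f x, h x)) := by
  simp only [renOf_eq_tensList, List.map_map]
  exact seq_tensList_map l fun x _ => NEq.delta_comp _ _ _

lemma renOf_map_diag (l : List Name) :
    (renOf (l.map fun a => (a, a)) : NTrm S) ≋ tensList (l.map .idt) := by
  rw [renOf_eq_tensList, List.map_map]
  exact tensList_congr_map l fun a _ => NEq.delta_id a

lemma permTermOf_of_fixed {π : FinPerm} {A : Finset Name} (h : ∀ a ∈ A, π • a = a) :
    (permTermOf π A : NTrm S) ≋ idOf A := by
  rw [permTermOf, List.map_congr_left fun a ha => by rw [h a (Finset.mem_toList.1 ha)]]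
  exact renOf_map_diag _

lemma permTermInv_of_fixed {π : FinPerm} {A : Finset Name} (h : ∀ a ∈ A, π • a = a) :
    (permTermInv π A : NTrm S) ≋ idOf A := by
  rw [permTermInv, List.map_congr_left fun a ha => by rw [h a (Finset.mem_toList.1 ha)]]
  exact renOf_map_diag _

lemma permTermOf_seq_permTermInv (π : FinPerm) (A : Finset Name) :
    permTermOf π A ⨾ permTermInv π A ≋ (idOf A : NTrm S) :=
  NEq.trans (renOf_map_seq A.toList id (π • ·) id) (renOf_map_diag _)

lemma permTermInv_smul_seq (π σ : FinPerm) (A : Finset Name) :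
    permTermInv π (σ • A) ⨾ permTermInv σ A ≋ (permTermInv (π * σ) A : NTrm S) := by
  rw [show (permTermInv (π * σ) A : NTrm S) =
      renOf (A.toList.map fun a => (π • σ • a, a)) by simp only [permTermInv, mul_smul]]
  refine NEq.trans (NEq.congr_seq ?_ (NEq.refl _)) (renOf_map_seq A.toList _ (σ • ·) id)
  rw [permTermInv, renOf_eq_tensList, renOf_eq_tensList, List.map_map, List.map_map]
  exact tensList_toList_smul _ σ A

lemma permTermOf_seq_smul (π σ : FinPerm) (A : Finset Name) :
    permTermOf σ A ⨾ permTermOf π (σ • A) ≋ (permTermOf (π * σ) A : NTrm S) := by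
  rw [show (permTermOf (π * σ) A : NTrm S) =
      renOf (A.toList.map fun a => (a, π • σ • a)) by simp only [permTermOf, mul_smul]]
  refine NEq.trans (NEq.congr_seq (NEq.refl _) ?_) (renOf_map_seq A.toList id (σ • ·) _)
  rw [permTermOf, renOf_eq_tensList, renOf_eq_tensList, List.map_map, List.map_map]
  exact tensList_toList_smul _ σ A

lemma permTermInv_union (π : FinPerm) {A B : Finset Name} (h : Disjoint A B) :
    (permTermInv π (A ∪ B) : NTrm S) ≋ permTermInv π A ⊎ permTermInv π B := by
  simp only [permTermInv, renOf_eq_tensList, List.map_map]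
  exact tensList_toList_union _ h

lemma permTermOf_union (π : FinPerm) {A B : Finset Name} (h : Disjoint A B) :
    (permTermOf π (A ∪ B) : NTrm S) ≋ permTermOf π A ⊎ permTermOf π B := by
  simp only [permTermOf, renOf_eq_tensList, List.map_map]
  exact tensList_toList_union _ h

lemma permTermInv_singleton (π : FinPerm) (a : Name) :
    (permTermInv π {a} : NTrm S) ≋ .delta (π • a) a := by
  rw [permTermInv, Finset.toList_singleton]
  exact NEq.tens_unit_right _

lemma permTermOf_singleton (π : FinPerm) (a : Name) :
    (permTermOf π {a} : NTrm S) ≋ .delta a (π • a) := by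
  rw [permTermOf, Finset.toList_singleton]
  exact NEq.tens_unit_right _

lemma delta_input_seq_gen (γ : S.gen) (b d a : List Name) (a₀ x : Name)
    (h : (x :: (d ++ a₀ :: a)).Nodup) :
    (idOf d.toFinset ⊎ (.delta x a₀ ⊎ idOf a.toFinset)) ⨾ .gen γ (d ++ a₀ :: a) b ≋
      .gen γ (d ++ x :: a) b := by
  rw [List.nodup_cons] at h
  have nmt := NEq.nmt_left (E := fun _ _ => False) γ (d ++ a₀ :: a) b d.length (by simp) x h.1
  simp only [List.getD_eq_getElem?_getD, List.getElem?_append_right le_rfl, Nat.sub_self,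
    List.getElem?_cons_zero, Option.getD_some, List.set_append_right _ _ le_rfl,
    List.set_cons_zero, List.toFinset_erase_of_nodup_middle h.2] at nmt
  refine NEq.trans (NEq.congr_seq ?_ (NEq.refl _)) nmt
  exact NEq.trans (tens_left_comm _ _ _) <| NEq.congr_tens (NEq.refl _) <|
    NEq.symm (idOf_union (List.disjoint_toFinset_of_nodup_middle h.2))

lemma gen_seq_delta_output (γ : S.gen) (a d b : List Name) (b₀ x : Name)
    (h : (x :: (d ++ b₀ :: b)).Nodup) :
    .gen γ a (d ++ b₀ :: b) ⨾ (idOf d.toFinset ⊎ (.delta b₀ x ⊎ idOf b.toFinset)) ≋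
      .gen γ a (d ++ x :: b) := by
  rw [List.nodup_cons] at h
  have nmt := NEq.nmt_right (E := fun _ _ => False) γ a (d ++ b₀ :: b) d.length (by simp) x h.1
  simp only [List.getD_eq_getElem?_getD, List.getElem?_append_right le_rfl, Nat.sub_self,
    List.getElem?_cons_zero, Option.getD_some, List.set_append_right _ _ le_rfl,
    List.set_cons_zero, List.toFinset_erase_of_nodup_middle h.2] at nmt
  refine NEq.trans (NEq.congr_seq (NEq.refl _) ?_) nmt
  calc idOf d.toFinset ⊎ (.delta b₀ x ⊎ idOf b.toFinset)
      ≋ (idOf d.toFinset ⊎ idOf b.toFinset) ⊎ .delta b₀ x :=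
        NEq.trans (NEq.congr_tens (NEq.refl _) (NEq.tens_comm _ _))
          (NEq.symm (NEq.tens_assoc _ _ _))
    _ ≋ _ := NEq.congr_tens
        (NEq.symm (idOf_union (List.disjoint_toFinset_of_nodup_middle h.2))) (NEq.refl _)

lemma idOf_tens_renOf_seq_gen {α : Type*} (γ : S.gen) (b : List Name) (f g : α → Name)
    (l : List α) (d : List Name) (h : (d ++ l.map f ++ l.map g).Nodup) :
    (idOf d.toFinset ⊎ renOf (l.map fun x => (f x, g x))) ⨾ .gen γ (d ++ l.map g) b ≋
      .gen γ (d ++ l.map f) b := by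
  induction l generalizing d with
  | nil =>
    simp only [List.map_nil, List.append_nil, renOf_nil]
    exact NEq.trans (NEq.congr_seq (NEq.tens_unit_right _) (NEq.refl _)) (seq_idOf_left rfl)
  | cons x l ih =>
    set R : NTrm S := renOf (l.map fun x => (f x, g x))
    have hR : R.cod = (l.map g).toFinset := by rw [cod_renOf, List.map_map]; rfl
    simp only [List.map_cons] at h
    have hstep : (f x :: (d ++ g x :: l.map g)).Nodup := by
      simp [List.nodup_append] at h ⊢; grind
    have hrest : (d ++ [f x] ++ l.map f ++ l.map g).Nodup := by
      simp [List.nodup_append] at h ⊢; grind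
    have hfx : f x ∉ d := fun hd => (List.nodup_cons.1 hstep).1 (List.mem_append_left _ hd)
    set D := idOf d.toFinset
    calc (D ⊎ (.delta (f x) (g x) ⊎ R)) ⨾ .gen γ (d ++ g x :: l.map g) b
        ≋ ((D ⊎ (idOf {f x} ⊎ R)) ⨾
              (D ⊎ (.delta (f x) (g x) ⊎ idOf (l.map g).toFinset))) ⨾
            .gen γ (d ++ g x :: l.map g) b := by
          refine NEq.congr_seq (NEq.trans (NEq.congr_tens (NEq.refl _) ?_) (idOf_tens_seq _ _ _))
            (NEq.refl _)
          rw [← hR]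
          exact tens_equiv_seq_idOf_left _ _
      _ ≋ (D ⊎ (idOf {f x} ⊎ R)) ⨾ .gen γ (d ++ f x :: l.map g) b :=
          NEq.trans (NEq.seq_assoc _ _ _) <|
            NEq.congr_seq (NEq.refl _) (delta_input_seq_gen γ b d _ _ _ hstep)
      _ ≋ (idOf (d ++ [f x]).toFinset ⊎ R) ⨾ .gen γ (d ++ [f x] ++ l.map g) b := by
          rw [List.append_cons d (f x) (l.map g)]
          exact NEq.congr_seq (idOf_tens_idOf_singleton_tens hfx R) (NEq.refl _)
      _ ≋ .gen γ (d ++ f x :: l.map f) b := by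
          rw [List.append_cons d (f x) (l.map f)]
          exact ih _ hrest

lemma gen_seq_idOf_tens_renOf {α : Type*} (γ : S.gen) (a : List Name) (f g : α → Name)
    (l : List α) (d : List Name) (h : (d ++ l.map g ++ l.map f).Nodup) :
    .gen γ a (d ++ l.map f) ⨾ (idOf d.toFinset ⊎ renOf (l.map fun x => (f x, g x))) ≋
      .gen γ a (d ++ l.map g) := by
  induction l generalizing d with
  | nil =>
    simp only [List.map_nil, List.append_nil, renOf_nil]
    exact NEq.trans (NEq.congr_seq (NEq.refl _) (NEq.tens_unit_right _)) (seq_idOf_right rfl)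
  | cons x l ih =>
    set R : NTrm S := renOf (l.map fun x => (f x, g x))
    have hR : R.dom = (l.map f).toFinset := by rw [dom_renOf, List.map_map]; rfl
    simp only [List.map_cons] at h
    have hstep : (g x :: (d ++ f x :: l.map f)).Nodup := by
      simp [List.nodup_append] at h ⊢; grind
    have hrest : (d ++ [g x] ++ l.map g ++ l.map f).Nodup := by
      simp [List.nodup_append] at h ⊢; grind
    have hgx : g x ∉ d := fun hd => (List.nodup_cons.1 hstep).1 (List.mem_append_left _ hd)
    set D := idOf d.toFinset
    calc .gen γ a (d ++ f x :: l.map f) ⨾ (D ⊎ (.delta (f x) (g x) ⊎ R))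
        ≋ .gen γ a (d ++ f x :: l.map f) ⨾
            ((D ⊎ (.delta (f x) (g x) ⊎ idOf (l.map f).toFinset)) ⨾
              (D ⊎ (idOf {g x} ⊎ R))) := by
          refine NEq.congr_seq (NEq.refl _)
            (NEq.trans (NEq.congr_tens (NEq.refl _) ?_) (idOf_tens_seq _ _ _))
          rw [← hR]
          exact tens_equiv_seq_idOf_right _ _
      _ ≋ .gen γ a (d ++ g x :: l.map f) ⨾ (D ⊎ (idOf {g x} ⊎ R)) :=
          NEq.trans (NEq.symm (NEq.seq_assoc _ _ _))
            (NEq.congr_seq (gen_seq_delta_output γ a d _ _ _ hstep) (NEq.refl _))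
      _ ≋ .gen γ a (d ++ [g x] ++ l.map f) ⨾ (idOf (d ++ [g x]).toFinset ⊎ R) := by
          rw [List.append_cons d (g x) (l.map f)]
          exact NEq.congr_seq (NEq.refl _) (idOf_tens_idOf_singleton_tens hgx R)
      _ ≋ .gen γ a (d ++ g x :: l.map g) := by
          rw [List.append_cons d (g x) (l.map g)]
          exact ih _ hrest

lemma renOf_seq_gen {α : Type*} (γ : S.gen) (b : List Name) (f g : α → Name)
    (l : List α) (h : (l.map f ++ l.map g).Nodup) :
    renOf (l.map fun x => (f x, g x)) ⨾ .gen γ (l.map g) b ≋ .gen γ (l.map f) b := by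
  have := idOf_tens_renOf_seq_gen γ b f g l [] h
  simp only [List.toFinset_nil, idOf_empty, List.nil_append] at this
  exact NEq.trans (NEq.congr_seq (NEq.symm (NEq.tens_unit_left _)) (NEq.refl _)) this

lemma gen_seq_renOf {α : Type*} (γ : S.gen) (a : List Name) (f g : α → Name)
    (l : List α) (h : (l.map g ++ l.map f).Nodup) :
    .gen γ a (l.map f) ⨾ renOf (l.map fun x => (f x, g x)) ≋ .gen γ a (l.map g) := by
  have := gen_seq_idOf_tens_renOf γ a f g l [] h
  simp only [List.toFinset_nil, idOf_empty, List.nil_append] at this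
  exact NEq.trans (NEq.congr_seq (NEq.refl _) (NEq.symm (NEq.tens_unit_left _))) this

lemma permTermInv_seq_gen (γ : S.gen) (a b : List Name) (ha : a.Nodup) (π : FinPerm) :
    permTermInv π a.toFinset ⨾ .gen γ a b ≋ .gen γ (a.map (π • ·)) b := by
  obtain ⟨N, hN₁, hN₂⟩ := exists_nodup_shift ha (MulAction.injective π)
  have h₁ := renOf_seq_gen (S := S) γ b (· + N) id a (by rw [List.map_id]; exact hN₁)
  rw [List.map_id] at h₁
  calc permTermInv π a.toFinset ⨾ .gen γ a b
      ≋ (renOf (a.map fun y => (π • y, y + N)) ⨾ renOf (a.map fun y => (y + N, id y))) ⨾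
          .gen γ a b :=
        NEq.congr_seq (NEq.trans (renOf_perm ((List.toFinset_toList ha).map _))
          (NEq.symm (renOf_map_seq a _ _ _))) (NEq.refl _)
    _ ≋ renOf (a.map fun y => (π • y, y + N)) ⨾ .gen γ (a.map (· + N)) b :=
        NEq.trans (NEq.seq_assoc _ _ _) (NEq.congr_seq (NEq.refl _) h₁)
    _ ≋ .gen γ (a.map (π • ·)) b := renOf_seq_gen γ b _ _ a hN₂

lemma gen_seq_permTermOf (γ : S.gen) (a b : List Name) (hb : b.Nodup) (π : FinPerm) :
    .gen γ a b ⨾ permTermOf π b.toFinset ≋ .gen γ a (b.map (π • ·)) := by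
  obtain ⟨N, hN₁, hN₂⟩ := exists_nodup_shift hb (MulAction.injective π)
  have h₁ := gen_seq_renOf (S := S) γ a id (· + N) b (by rw [List.map_id]; exact hN₁)
  rw [List.map_id] at h₁
  calc .gen γ a b ⨾ permTermOf π b.toFinset
      ≋ .gen γ a b ⨾
          (renOf (b.map fun y => (id y, y + N)) ⨾ renOf (b.map fun y => (y + N, π • y))) :=
        NEq.congr_seq (NEq.refl _) (NEq.trans (renOf_perm ((List.toFinset_toList hb).map _))
          (NEq.symm (renOf_map_seq b _ _ _)))
    _ ≋ .gen γ a (b.map (· + N)) ⨾ renOf (b.map fun y => (y + N, π • y)) :=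
        NEq.trans (NEq.symm (NEq.seq_assoc _ _ _)) (NEq.congr_seq h₁ (NEq.refl _))
    _ ≋ .gen γ a (b.map (π • ·)) := gen_seq_renOf γ a _ _ b hN₂

noncomputable def conjBy (π : FinPerm) (A C : Finset Name) (t : NTrm S) : NTrm S :=
  permTermInv π A ⨾ t ⨾ permTermOf π C

lemma conjBy_congr (π : FinPerm) (A C : Finset Name) {t t' : NTrm S} (h : t ≋ t') :
    conjBy π A C t ≋ conjBy π A C t' :=
  NEq.congr_seq (NEq.congr_seq (NEq.refl _) h) (NEq.refl _)

lemma conjBy_of_fixed {π : FinPerm} {t : NTrm S} (hA : ∀ a ∈ t.dom, π • a = a)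
    (hC : ∀ c ∈ t.cod, π • c = c) : conjBy π t.dom t.cod t ≋ t :=
  calc conjBy π t.dom t.cod t ≋ idOf t.dom ⨾ t ⨾ idOf t.cod :=
        NEq.congr_seq (NEq.congr_seq (permTermInv_of_fixed hA) (NEq.refl _))
          (permTermOf_of_fixed hC)
    _ ≋ t := NEq.trans (NEq.congr_seq (NEq.seq_id_left t) (NEq.refl _)) (NEq.seq_id_right t)

lemma conjBy_conjBy (π σ : FinPerm) (A C : Finset Name) (t : NTrm S) :
    conjBy π (σ • A) (σ • C) (conjBy σ A C t) ≋ conjBy (π * σ) A C t :=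
  calc conjBy π (σ • A) (σ • C) (conjBy σ A C t)
      ≋ (permTermInv π (σ • A) ⨾ permTermInv σ A) ⨾ (t ⨾ permTermOf σ C) ⨾
          permTermOf π (σ • C) :=
        NEq.congr_seq (NEq.trans (NEq.congr_seq (NEq.refl _) (NEq.seq_assoc _ _ _))
          (NEq.symm (NEq.seq_assoc _ _ _))) (NEq.refl _)
    _ ≋ permTermInv (π * σ) A ⨾ (t ⨾ permTermOf σ C) ⨾ permTermOf π (σ • C) :=
        NEq.congr_seq (NEq.congr_seq (permTermInv_smul_seq π σ A) (NEq.refl _)) (NEq.refl _)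
    _ ≋ permTermInv (π * σ) A ⨾ (t ⨾ (permTermOf σ C ⨾ permTermOf π (σ • C))) :=
        NEq.trans (NEq.seq_assoc _ _ _) (NEq.congr_seq (NEq.refl _) (NEq.seq_assoc _ _ _))
    _ ≋ conjBy (π * σ) A C t :=
        NEq.trans (NEq.congr_seq (NEq.refl _)
          (NEq.congr_seq (NEq.refl _) (permTermOf_seq_smul π σ C)))
          (NEq.symm (NEq.seq_assoc _ _ _))

lemma conjBy_tens (π : FinPerm) {A A' C C' : Finset Name} (hA : Disjoint A A')
    (hC : Disjoint C C') (t u : NTrm S) :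
    conjBy π (A ∪ A') (C ∪ C') (t ⊎ u) ≋ conjBy π A C t ⊎ conjBy π A' C' u :=
  calc conjBy π (A ∪ A') (C ∪ C') (t ⊎ u)
      ≋ (permTermInv π A ⊎ permTermInv π A') ⨾ (t ⊎ u) ⨾
          (permTermOf π C ⊎ permTermOf π C') :=
        NEq.congr_seq (NEq.congr_seq (permTermInv_union π hA) (NEq.refl _))
          (permTermOf_union π hC)
    _ ≋ _ := NEq.trans (NEq.congr_seq (NEq.interchange _ _ _ _) (NEq.refl _))
        (NEq.interchange _ _ _ _)

lemma seq_conjBy (π : FinPerm) (A B C : Finset Name) {t u : NTrm S} (hu : u.dom = B) :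
    conjBy π A B t ⨾ conjBy π B C u ≋ conjBy π A C (t ⨾ u) :=
  calc conjBy π A B t ⨾ conjBy π B C u
      ≋ (permTermInv π A ⨾ t) ⨾
          ((permTermOf π B ⨾ permTermInv π B) ⨾ u ⨾ permTermOf π C) :=
        NEq.trans (NEq.seq_assoc _ _ _) <| NEq.congr_seq (NEq.refl _) <|
          NEq.trans (NEq.symm (NEq.seq_assoc _ _ _))
            (NEq.congr_seq (NEq.symm (NEq.seq_assoc _ _ _)) (NEq.refl _))
    _ ≋ (permTermInv π A ⨾ t) ⨾ (u ⨾ permTermOf π C) :=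
        NEq.congr_seq (NEq.refl _) <| NEq.congr_seq (NEq.trans
          (NEq.congr_seq (permTermOf_seq_permTermInv π B) (NEq.refl _)) (seq_idOf_left hu))
          (NEq.refl _)
    _ ≋ conjBy π A C (t ⨾ u) :=
        NEq.trans (NEq.symm (NEq.seq_assoc _ _ _))
          (NEq.congr_seq (NEq.seq_assoc _ _ _) (NEq.refl _))

lemma pact_gen_equiv_conjBy (π : FinPerm) (γ : S.gen) {a b : List Name} (ha : a.Nodup)
    (hb : b.Nodup) : .pact π (.gen γ a b) ≋ conjBy π a.toFinset b.toFinset (.gen γ a b) :=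
  NEq.trans (NEq.pact_gen π γ a b) <| NEq.symm <|
    NEq.trans (NEq.congr_seq (permTermInv_seq_gen γ a b ha π) (NEq.refl _))
      (gen_seq_permTermOf γ _ b hb π)

lemma pact_delta_equiv_conjBy (π : FinPerm) (a b : Name) :
    .pact π (.delta a b) ≋ conjBy π {a} {b} (.delta a b : NTrm S) :=
  calc .pact π (.delta a b) ≋ .delta (π • a) a ⨾ .delta a b ⨾ .delta b (π • b) :=
        NEq.trans (NEq.pact_delta π a b) <| NEq.symm <|
          NEq.trans (NEq.congr_seq (NEq.delta_comp _ _ _) (NEq.refl _)) (NEq.delta_comp _ _ _)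
    _ ≋ conjBy π {a} {b} (.delta a b) :=
        NEq.symm (NEq.congr_seq (NEq.congr_seq (permTermInv_singleton π a) (NEq.refl _))
          (permTermOf_singleton π b))

lemma pact_idt_equiv_conjBy (π : FinPerm) (a : Name) :
    .pact π (.idt a) ≋ conjBy π {a} {a} (.idt a : NTrm S) :=
  calc .pact π (.idt a) ≋ .pact π (.delta a a) :=
        NEq.trans (NEq.pact_idt π a) <| NEq.symm <|
          NEq.trans (NEq.pact_delta π a a) (NEq.delta_id _)
    _ ≋ conjBy π {a} {a} (.delta a a) := pact_delta_equiv_conjBy π a a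
    _ ≋ conjBy π {a} {a} (.idt a) := conjBy_congr π _ _ (NEq.delta_id a)

theorem WF.pact_equiv_conjBy {t : NTrm S} (ht : t.WF) (π : FinPerm) :
    .pact π t ≋ conjBy π t.dom t.cod t := by
  induction t generalizing π with
  | gen γ a b => exact pact_gen_equiv_conjBy π γ ht.1 ht.2.1
  | idt a => exact pact_idt_equiv_conjBy π a
  | delta a b => exact pact_delta_equiv_conjBy π a b
  | unit =>
    refine NEq.trans (NEq.pact_unit π) (NEq.symm ?_)
    simpa [conjBy, dom, cod] using
      NEq.trans (NEq.congr_seq unit_seq_unit (NEq.refl _)) unit_seq_unit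
  | tens s u ihs ihu =>
    obtain ⟨hs, hu, hdom, hcod⟩ := ht
    exact NEq.trans (NEq.pact_tens π s u) <| NEq.trans (NEq.congr_tens (ihs hs π) (ihu hu π)) <|
      NEq.symm (conjBy_tens π hdom hcod s u)
  | seq s u ihs ihu =>
    obtain ⟨hs, hu, hsu⟩ := ht
    exact NEq.trans (NEq.pact_seq π s u) <| NEq.trans (NEq.congr_seq (ihs hs π) (ihu hu π)) <|
      hsu ▸ seq_conjBy π s.dom s.cod u.cod hsu.symm
  | pact σ u ihu =>
    calc .pact π (.pact σ u) ≋ conjBy (π * σ) u.dom u.cod u :=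
          NEq.trans (NEq.symm (NEq.pact_mul π σ u)) (ihu ht (π * σ))
      _ ≋ conjBy π (σ • u.dom) (σ • u.cod) (.pact σ u) :=
          NEq.symm (NEq.trans (conjBy_congr π _ _ (ihu ht σ)) (conjBy_conjBy π σ _ _ u))

theorem WF.tsupports {t : NTrm S} (ht : t.WF) : TSupports S ↑(t.dom ∪ t.cod) t := fun π hπ =>
  NEq.trans (ht.pact_equiv_conjBy π) <| conjBy_of_fixed
    (fun a ha => hπ a (by simp [ha])) (fun c hc => hπ c (by simp [hc]))

end NTrm

/-- Sequential composition binds internal names: for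
`t : A → C` and `s : C → B`, the support of `t ; s` is contained in `A ∪ B`;
in particular, names in `C \ (A ∪ B)` are not in the support of `t ; s`. -/
theorem stmt12 {S : NSig} (t s : NTrm S) (ht : t.WF) (hs : s.WF)
    (hc : t.cod = s.dom) :
    TSupports S (↑(t.dom ∪ s.cod) : Set Name) (.seq t s) ∧
    msupp S (.seq t s) ⊆ (↑(t.dom ∪ s.cod) : Set Name) ∧
    ∀ c ∈ t.cod, c ∉ t.dom → c ∉ s.cod → c ∉ msupp S (.seq t s) := by
  have hsupp : TSupports S (↑(t.dom ∪ s.cod) : Set Name) (.seq t s) :=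
    NTrm.WF.tsupports (t := .seq t s) ⟨ht, hs, hc⟩
  have hmsupp : msupp S (.seq t s) ⊆ (↑(t.dom ∪ s.cod) : Set Name) :=
    Set.sInter_subset_of_mem hsupp
  refine ⟨hsupp, hmsupp, fun c _ hcA hcB hcm => ?_⟩
  simpa [hcA, hcB] using hmsupp hcm
end
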